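/- arXiv:1311.5690 — 2 statements merged into one kernel-verified Lean document; each statement's English description precedes it below -/
import Mathlib

section
/- In the model M1 (moves x ↦ 3x+1; x ↦ 2x; x ↦ x/2 if 2 ∣ x; x ↦ (x-1)/3 if x ≡ 1 mod 3 with result a positive integer), for every positive integer k the number 9k+4 is reachable from 9k+2 by a finite sequence of moves, namely via the sequence D, F, F, B, T, T. -/
/-- One allowed move of model M1 on positive integers. -/
def M1Step (x y : ℕ) : Prop :=
  0 < x ∧ (y = 3 * x + 1 ∨ y = 2 * x ∨ (x % 2 = 0 ∧ y = x / 2) ∨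
    (x % 3 = 1 ∧ 1 < x ∧ y = (x - 1) / 3))

namespace M1Step

theorem to_three_mul_add_one {x : ℕ} (hx : 0 < x) : M1Step x (3 * x + 1) :=
  ⟨hx, .inl rfl⟩

theorem to_two_mul {x : ℕ} (hx : 0 < x) : M1Step x (2 * x) :=
  ⟨hx, .inr (.inl rfl)⟩

theorem from_two_mul {y : ℕ} (hy : 0 < y) : M1Step (2 * y) y :=
  ⟨by omega, .inr (.inr (.inl ⟨by omega, by omega⟩))⟩

theorem from_three_mul_add_one {y : ℕ} (hy : 0 < y) : M1Step (3 * y + 1) y :=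
  ⟨by omega, .inr (.inr (.inr ⟨by omega, by omega, by omega⟩))⟩

end M1Step

theorem reach_9k2_to_9k4_via_DFFBTT (k : ℕ) (hk : 0 < k) :
    M1Step (9 * k + 2) (18 * k + 4) ∧ M1Step (18 * k + 4) (6 * k + 1) ∧
    M1Step (6 * k + 1) (2 * k) ∧ M1Step (2 * k) k ∧
    M1Step k (3 * k + 1) ∧ M1Step (3 * k + 1) (9 * k + 4) := by
  refine ⟨?D, ?F₁, ?F₂, M1Step.from_two_mul hk,
    M1Step.to_three_mul_add_one hk, ?T⟩
  case D => convert M1Step.to_two_mul (x := 9 * k + 2) (by omega) using 1; ring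
  case F₁ => convert M1Step.from_three_mul_add_one (y := 6 * k + 1) (by omega) using 1; ring
  case F₂ => convert M1Step.from_three_mul_add_one (y := 2 * k) (by omega) using 1; ring
  case T => convert M1Step.to_three_mul_add_one (x := 3 * k + 1) (by omega) using 1; ring
end

section
/- In the model M1 (moves x ↦ 3x+1; x ↦ 2x; x ↦ x/2 if 2 ∣ x; x ↦ (x-1)/3 if x ≡ 1 mod 3 with positive result), for every positive integer k the number 9k+7 is reachable from 9k+5 via the move sequence D, D, D, F, F, B, B, T, B, T. -/
namespace M1Step

variable {x y : ℕ}

theorem triple (hx : 0 < x) (h : y = 3 * x + 1) : M1Step x y :=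
  ⟨hx, .inl h⟩

theorem double (hx : 0 < x) (h : y = 2 * x) : M1Step x y :=
  ⟨hx, .inr (.inl h)⟩

theorem halve (hy : 0 < y) (h : x = 2 * y) : M1Step x y :=
  ⟨by omega, .inr (.inr (.inl ⟨by omega, by omega⟩))⟩

theorem third (hy : 0 < y) (h : x = 3 * y + 1) : M1Step x y :=
  ⟨by omega, .inr (.inr (.inr ⟨by omega, by omega, by omega⟩))⟩

end M1Step

theorem reach_9k5_to_9k7_general (k : ℕ) :
    M1Step (9 * k + 5) (18 * k + 10) ∧ M1Step (18 * k + 10) (36 * k + 20) ∧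
    M1Step (36 * k + 20) (72 * k + 40) ∧ M1Step (72 * k + 40) (24 * k + 13) ∧
    M1Step (24 * k + 13) (8 * k + 4) ∧ M1Step (8 * k + 4) (4 * k + 2) ∧
    M1Step (4 * k + 2) (2 * k + 1) ∧ M1Step (2 * k + 1) (6 * k + 4) ∧
    M1Step (6 * k + 4) (3 * k + 2) ∧ M1Step (3 * k + 2) (9 * k + 7) :=
  ⟨.double (by omega) (by ring), .double (by omega) (by ring), .double (by omega) (by ring),
    .third (by omega) (by ring), .third (by omega) (by ring),
    .halve (by omega) (by ring), .halve (by omega) (by ring),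
    .triple (by omega) (by ring),
    .halve (by omega) (by ring),
    .triple (by omega) (by ring)⟩

theorem reach_9k5_to_9k7 (k : ℕ) (hk : 0 < k) :
    M1Step (9 * k + 5) (18 * k + 10) ∧ M1Step (18 * k + 10) (36 * k + 20) ∧
    M1Step (36 * k + 20) (72 * k + 40) ∧ M1Step (72 * k + 40) (24 * k + 13) ∧
    M1Step (24 * k + 13) (8 * k + 4) ∧ M1Step (8 * k + 4) (4 * k + 2) ∧
    M1Step (4 * k + 2) (2 * k + 1) ∧ M1Step (2 * k + 1) (6 * k + 4) ∧
    M1Step (6 * k + 4) (3 * k + 2) ∧ M1Step (3 * k + 2) (9 * k + 7) :=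
  reach_9k5_to_9k7_general k
end
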